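/- In the construction of the co-NP-hardness reduction, for any arrangement f of the pair (G_A, G_M) and any vertex v ∈ V(G_M) \ {f(a)}, it holds that v ∉ f(V(H) ∪ {b}) or v ∉ f(X); that is, no country other than f(a) simultaneously contains an agent from V(H) ∪ {b} and an agent from X. -/

import Mathlib

/-- An arrangement of agents (vertices of `GA`) into countries (vertices of `GM`):
every nonempty preimage induces a connected subgraph of `GA`. -/
def IsArrangement {A M : Type*} (GA : SimpleGraph A) (f : A → M) : Prop :=
  ∀ c : M, (f ⁻¹' {c}).Nonempty → (GA.induce (f ⁻¹' {c})).Connected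

/-- An AAP transfer: a set `U` of agents of country `s` is moved along an edge
`st` of `GM` to country `t`; each of `GA[U]`, `GA[f⁻¹(s) \ U]`, `GA[f⁻¹(t) ∪ U]`
is connected or empty, and `f⁻¹({s,t}) \ U ≠ ∅`. -/
def Transfer {A M : Type*} (GA : SimpleGraph A) (GM : SimpleGraph M)
    (f g : A → M) : Prop :=
  ∃ (s t : M) (U : Set A), GM.Adj s t ∧ U ⊆ f ⁻¹' {s} ∧
    (U = ∅ ∨ (GA.induce U).Connected) ∧
    (f ⁻¹' {s} \ U = ∅ ∨ (GA.induce (f ⁻¹' {s} \ U)).Connected) ∧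
    (f ⁻¹' {t} ∪ U = ∅ ∨ (GA.induce (f ⁻¹' {t} ∪ U)).Connected) ∧
    (f ⁻¹' {s, t} \ U).Nonempty ∧
    (∀ x ∈ U, g x = t) ∧ (∀ x, x ∉ U → g x = f x)

/-- t-equivalence: related by a finite sequence of transfers. -/
def TEquiv {A M : Type*} (GA : SimpleGraph A) (GM : SimpleGraph M)
    (f g : A → M) : Prop :=
  Relation.ReflTransGen (Transfer GA GM) f g

/-- A SUBNET MERGER along an edge `st` of `GM`: all agents of `s` are merged into
country `t`, where `f⁻¹(s) ≠ ∅`, `|f⁻¹({s,t})| ≥ 2` and `GA[f⁻¹({s,t})]` is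
connected. -/
def SubnetMerger {A M : Type*} (GA : SimpleGraph A) (GM : SimpleGraph M)
    (f g : A → M) : Prop :=
  ∃ s t : M, GM.Adj s t ∧ (f ⁻¹' {s}).Nonempty ∧
    2 ≤ (f ⁻¹' ({s, t} : Set M)).ncard ∧
    (GA.induce (f ⁻¹' ({s, t} : Set M))).Connected ∧
    (∀ x, f x ∈ ({s, t} : Set M) → g x = t) ∧
    (∀ x, f x ∉ ({s, t} : Set M) → g x = f x)

/-- The number of pebbles of the configuration associated with an arrangement:
the number of countries holding at least two agents. -/
noncomputable def pebCount {A M : Type*} (f : A → M) : ℕ :=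
  {c : M | 2 ≤ (f ⁻¹' {c}).ncard}.ncard

/-- `g` is an `f`-irreducible arrangement: it is t-equivalent to `f` and its
associated configuration has the minimum possible number of pebbles. -/
def IsIrreducibleFor {A M : Type*} (GA : SimpleGraph A) (GM : SimpleGraph M)
    (f g : A → M) : Prop :=
  TEquiv GA GM f g ∧ ∀ h : A → M, TEquiv GA GM f h → pebCount g ≤ pebCount h

/-- The agent network `G_A` of the reduction: vertices are `V(H) ∪ X ∪ {a,b}`
(coded `Sum.inl h`, `Sum.inr (Sum.inl x)`, `a = Sum.inr (Sum.inr 0)`,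
`b = Sum.inr (Sum.inr 1)`), with the edges of the complement of `H`, all pairs
inside `X`, all edges from `a` to `V(H) ∪ X`, and all edges from `b` to `V(H)`. -/
def agentGraph {V : Type*} (H : SimpleGraph V) : SimpleGraph (V ⊕ V ⊕ Fin 2) :=
  SimpleGraph.fromRel (fun u w =>
    match u, w with
    | Sum.inl x, Sum.inl y => x ≠ y ∧ ¬ H.Adj x y
    | Sum.inr (Sum.inl x), Sum.inr (Sum.inl y) => x ≠ y
    | Sum.inr (Sum.inr _), Sum.inl _ => True
    | Sum.inr (Sum.inr i), Sum.inr (Sum.inl _) => i = 0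
    | _, _ => False)

/-! The agents of `X` are adjacent only to each other and to `a`, so once `a` is removed no
connected set of agents can meet both `X` and `V(H) ∪ {b}`. -/

theorem SimpleGraph.Preconnected.mem_of_forall_adj_mem {α : Type*} {G : SimpleGraph α}
    (hG : G.Preconnected) {S : Set α} (hS : ∀ u w, G.Adj u w → u ∈ S → w ∈ S)
    {u w : α} (hu : u ∈ S) : w ∈ S := by
  by_contra hw
  obtain ⟨p⟩ := hG u w
  obtain ⟨d, -, hd, hd'⟩ := p.exists_boundary_dart S hu hw
  exact hd' (hS _ _ d.adj hd)

theorem agentGraph_adj_inr_inl {V : Type*} {H : SimpleGraph V} {x : V} {z : V ⊕ V ⊕ Fin 2}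
    (h : (agentGraph H).Adj (Sum.inr (Sum.inl x)) z) :
    (∃ y : V, z = Sum.inr (Sum.inl y)) ∨ z = Sum.inr (Sum.inr 0) := by
  rcases z with y | y | i <;> simp_all [agentGraph]

theorem exists_eq_inr_inl_of_agentGraph_induce_preconnected {V : Type*} {H : SimpleGraph V}
    {C : Set (V ⊕ V ⊕ Fin 2)} (hC : ((agentGraph H).induce C).Preconnected)
    (ha : Sum.inr (Sum.inr 0) ∉ C) {x : V} (hx : Sum.inr (Sum.inl x) ∈ C) (z : C) :
    ∃ y : V, (z : V ⊕ V ⊕ Fin 2) = Sum.inr (Sum.inl y) := by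
  refine hC.mem_of_forall_adj_mem
    (S := {z : C | ∃ y : V, (z : V ⊕ V ⊕ Fin 2) = Sum.inr (Sum.inl y)}) ?_ (u := ⟨_, hx⟩) ⟨x, rfl⟩
  rintro ⟨u, _⟩ ⟨w, hw⟩ huw ⟨y, rfl⟩
  exact (agentGraph_adj_inr_inl huw).resolve_right fun h ↦ ha (h ▸ hw)

theorem no_mixed_country_general {V M : Type*} (H : SimpleGraph V)
    (f : (V ⊕ V ⊕ Fin 2) → M) (hf : IsArrangement (agentGraph H) f) :
    ∀ v : M, v ≠ f (Sum.inr (Sum.inr 0)) →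
      (¬ ∃ x : V ⊕ V ⊕ Fin 2,
          ((∃ h : V, x = Sum.inl h) ∨ x = Sum.inr (Sum.inr 1)) ∧ f x = v) ∨
      (¬ ∃ x : V, f (Sum.inr (Sum.inl x)) = v) := by
  intro v hv
  by_contra! ⟨⟨w, hw, hwv⟩, x, hxv⟩
  have hC := (hf v ⟨_, hxv⟩).preconnected
  obtain ⟨y, hy⟩ := exists_eq_inr_inl_of_agentGraph_induce_preconnected hC (Ne.symm hv) hxv
    ⟨w, hwv⟩
  rcases hw with ⟨h, rfl⟩ | rfl <;> simp at hy

/-- Technical lemma: for any arrangement `f` of `(G_A, G_M)` with `G_A` the agent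
network of the reduction, every country `v ≠ f(a)` contains no agent of
`V(H) ∪ {b}` or no agent of `X`. -/
theorem no_mixed_country {V M : Type*} (H : SimpleGraph V) (GM : SimpleGraph M)
    (f : (V ⊕ V ⊕ Fin 2) → M) (hf : IsArrangement (agentGraph H) f) :
    ∀ v : M, v ≠ f (Sum.inr (Sum.inr 0)) →
      (¬ ∃ x : V ⊕ V ⊕ Fin 2,
          ((∃ h : V, x = Sum.inl h) ∨ x = Sum.inr (Sum.inr 1)) ∧ f x = v) ∨
      (¬ ∃ x : V, f (Sum.inr (Sum.inl x)) = v) :=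
  no_mixed_country_general H f hf
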